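/- arXiv:0912.2946 — 9 statements merged into one kernel-verified Lean document; each statement's English description precedes it below -/
import Mathlib

section
/- Let G be an abelian group and U a symmetric subset of G containing 0. If there exists m ∈ ℕ with (1/m)U + (1/m)U ⊆ U, then for all n ∈ ℕ, (1/(mn))U + (1/(mn))U ⊆ (1/n)U. -/
open Pointwise

/-- `(1/n)U = {x : kx ∈ U for all 1 ≤ k ≤ n}`. -/
def oneDiv {G : Type*} [AddCommGroup G] (n : ℕ) (U : Set G) : Set G :=
  {x : G | ∀ k : ℕ, 1 ≤ k → k ≤ n → k • x ∈ U}

theorem stmt0 {G : Type*} [AddCommGroup G] (U : Set G)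
    (h0 : (0 : G) ∈ U) (hsym : ∀ x ∈ U, -x ∈ U)
    (m : ℕ) (hm : 0 < m) (h : oneDiv m U + oneDiv m U ⊆ U) :
    ∀ n : ℕ, 0 < n → oneDiv (m * n) U + oneDiv (m * n) U ⊆ oneDiv n U := by
  intro n hn z hz
  obtain ⟨x, hx, y, hy, rfl⟩ := hz
  intro k hk1 hkn
  have key : ∀ w : G, w ∈ oneDiv (m * n) U → k • w ∈ oneDiv m U := by
    intro w hw j hj1 hjm
    rw [smul_smul]
    exact hw (j * k) (Nat.one_le_iff_ne_zero.mpr (by positivity))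
      (Nat.mul_le_mul hjm hkn)
  rw [smul_add]
  exact h ⟨k • x, key x hx, k • y, key y hy, rfl⟩
end

section
/- Let G be an abelian group and U a symmetric subset of G containing 0 such that (1/m)U + (1/m)U ⊆ U for some m ∈ ℕ. Then U_∞ = ⋂_{n∈ℕ} (1/n)U is a subgroup of G. -/
open Pointwise

/-- `U` is a group topology generating (GTG) set. -/
def IsGTG {G : Type*} [AddCommGroup G] (U : Set G) : Prop :=
  ∃ m : ℕ, 0 < m ∧ oneDiv m U + oneDiv m U ⊆ U

/-- The GTG-degree of `U`: the least `m` with `(1/m)U + (1/m)U ⊆ U`, `⊤` if none exists. -/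
noncomputable def gtgDegree {G : Type*} [AddCommGroup G] (U : Set G) : ℕ∞ :=
  sInf {c : ℕ∞ | ∃ m : ℕ, c = (m : ℕ∞) ∧ 0 < m ∧ oneDiv m U + oneDiv m U ⊆ U}

theorem stmt1 {G : Type*} [AddCommGroup G] (U : Set G)
    (h0 : (0 : G) ∈ U) (hsym : ∀ x ∈ U, -x ∈ U)
    (hGTG : IsGTG U) :
    ∃ H : AddSubgroup G, (H : Set G) = {x : G | ∀ n : ℕ, 1 ≤ n → n • x ∈ U} := by
  obtain ⟨m, hm, hsub⟩ := hGTG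
  refine ⟨AddSubgroup.mk (AddSubmonoid.mk (AddSubsemigroup.mk
    {x : G | ∀ n : ℕ, 1 ≤ n → n • x ∈ U} ?_) ?_) ?_, rfl⟩
  · intro a b ha hb n hn
    have hma : n • a ∈ oneDiv m U := by
      intro k hk hkm
      rw [smul_smul]
      exact ha (k * n) (Nat.one_le_iff_ne_zero.2 (by positivity))
    have hmb : n • b ∈ oneDiv m U := by
      intro k hk hkm
      rw [smul_smul]
      exact hb (k * n) (Nat.one_le_iff_ne_zero.2 (by positivity))
    have : n • a + n • b ∈ U := hsub (Set.add_mem_add hma hmb)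
    simpa [smul_add] using this
  · intro n hn; simpa using h0
  · intro a ha n hn
    have := hsym _ (ha n hn)
    simpa using this
end

section
/- Let (G_i)_{i∈I} be a family of abelian groups and A_i ⊆ G_i symmetric subsets containing 0. Then the product A = ∏ A_i is a GTG subset of ∏ G_i if and only if all A_i are GTG sets and the set {γ(A_i) : i ∈ I} is bounded. -/
open Pointwise

lemma oneDiv_mono {G : Type*} [AddCommGroup G] {m n : ℕ} (h : m ≤ n) (U : Set G) :
    oneDiv n U ⊆ oneDiv m U := fun x hx k hk1 hk2 => hx k hk1 (hk2.trans h)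

theorem stmt6 {I : Type*} (G : I → Type*) [∀ i, AddCommGroup (G i)]
    (A : ∀ i, Set (G i))
    (h0 : ∀ i, (0 : G i) ∈ A i) (hsym : ∀ i, ∀ x ∈ A i, -x ∈ A i) :
    IsGTG (Set.univ.pi A) ↔
      (∀ i, IsGTG (A i)) ∧ ∃ B : ℕ, ∀ i, gtgDegree (A i) ≤ (B : ℕ∞) := by
  constructor
  · rintro ⟨m, hm0, hm⟩
    have key : ∀ i, 0 < m ∧ oneDiv m (A i) + oneDiv m (A i) ⊆ A i := by
      intro i
      refine ⟨hm0, ?_⟩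
      classical
      rintro z ⟨a, ha, b, hb, rfl⟩
      have hxy : (Pi.single i a : ∀ j, G j) + Pi.single i b ∈ Set.univ.pi A := by
        set x : ∀ j, G j := Pi.single i a with hx
        set y : ∀ j, G j := Pi.single i b with hy
        apply hm
        refine ⟨x, ?_, y, ?_, rfl⟩
        · intro k hk1 hk2 j _
          by_cases hj : j = i
          · subst hj
            simpa [hx] using ha k hk1 hk2
          · simp [hx, Pi.single_eq_of_ne hj, h0 j]
        · intro k hk1 hk2 j _
          by_cases hj : j = i
          · subst hj
            simpa [hy] using hb k hk1 hk2
          · simp [hy, Pi.single_eq_of_ne hj, h0 j]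
      have := hxy i (Set.mem_univ i)
      simpa using this
    refine ⟨fun i => ⟨m, key i⟩, m, fun i => ?_⟩
    exact sInf_le ⟨m, rfl, key i⟩
  · rintro ⟨hgtg, B, hB⟩
    set M : ℕ := max B 1 with hM
    refine ⟨M, lt_of_lt_of_le Nat.one_pos (le_max_right _ _), ?_⟩
    have hMi : ∀ i, oneDiv M (A i) + oneDiv M (A i) ⊆ A i := by
      intro i
      have hne : {c : ℕ∞ | ∃ m : ℕ, c = (m : ℕ∞) ∧ 0 < m ∧
          oneDiv m (A i) + oneDiv m (A i) ⊆ A i}.Nonempty := by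
        obtain ⟨m, hm0, hm⟩ := hgtg i
        exact ⟨(m : ℕ∞), m, rfl, hm0, hm⟩
      have hmem := csInf_mem hne
      obtain ⟨m, hmeq, hm0, hm⟩ := hmem
      have hmB : (m : ℕ∞) ≤ (B : ℕ∞) := by
        rw [← hmeq]; exact hB i
      have hmB' : m ≤ B := by exact_mod_cast hmB
      have hmM : m ≤ M := hmB'.trans (le_max_left _ _)
      exact fun z hz => hm ((Set.add_subset_add (oneDiv_mono hmM _) (oneDiv_mono hmM _)) hz)
    rintro z ⟨x, hx, y, hy, rfl⟩ i _
    refine hMi i ⟨x i, ?_, y i, ?_, rfl⟩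
    · intro k hk1 hk2
      simpa using hx k hk1 hk2 i (Set.mem_univ i)
    · intro k hk1 hk2
      simpa using hy k hk1 hk2 i (Set.mem_univ i)
end

section
/- A symmetric subset A of a real vector space E satisfying [0,1]·A ⊆ A is a GTG set (of the additive group of E) if and only if A is pseudoconvex, i.e. A + A ⊆ cA for some c > 0. -/
open Pointwise

theorem stmt10 {E : Type*} [AddCommGroup E] [Module ℝ E] (A : Set E)
    (h0 : (0 : E) ∈ A) (hsym : ∀ x ∈ A, -x ∈ A)
    (hstar : ∀ t : ℝ, t ∈ Set.Icc (0 : ℝ) 1 → ∀ a ∈ A, t • a ∈ A) :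
    IsGTG A ↔ ∃ c : ℝ, 0 < c ∧ A + A ⊆ (c • A : Set E) := by
  constructor
  · rintro ⟨m, hm, hsub⟩
    have hm0 : (0 : ℝ) < 2 * m := by positivity
    refine ⟨2 * m, hm0, ?_⟩
    rintro _ ⟨a, ha, b, hb, rfl⟩
    have key : ∀ x ∈ A, (1 / (2 * (m : ℝ))) • x ∈ oneDiv m A := by
      intro x hx k hk1 hkm
      rw [← Nat.cast_smul_eq_nsmul ℝ, smul_smul]
      refine hstar _ ⟨by positivity, ?_⟩ x hx
      rw [mul_one_div, div_le_one hm0]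
      calc (k : ℝ) ≤ m := by exact_mod_cast hkm
        _ ≤ 2 * m := by nlinarith [(Nat.cast_pos (α := ℝ)).mpr hm]
    have hmem : (1 / (2 * (m : ℝ))) • a + (1 / (2 * (m : ℝ))) • b ∈ A :=
      hsub (Set.add_mem_add (key a ha) (key b hb))
    refine Set.mem_smul_set.2 ⟨_, hmem, ?_⟩
    rw [smul_add, smul_smul, smul_smul, mul_one_div, div_self hm0.ne']
    simp
  · rintro ⟨c, hc, hsub⟩
    set m : ℕ := max ⌈c⌉₊ 1 with hmdef
    have hm1 : 0 < m := lt_of_lt_of_le one_pos (le_max_right _ _)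
    have hmc : c ≤ (m : ℝ) := le_trans (Nat.le_ceil c) (by exact_mod_cast le_max_left _ _)
    refine ⟨m, hm1, ?_⟩
    rintro _ ⟨x, hx, y, hy, rfl⟩
    have hmx : m • x ∈ A := hx m hm1 le_rfl
    have hmy : m • y ∈ A := hy m hm1 le_rfl
    obtain ⟨a, ha, heq⟩ := Set.mem_smul_set.1 (hsub (Set.add_mem_add hmx hmy))
    have hmR : (0 : ℝ) < m := by exact_mod_cast hm1
    have heq2 : (m : ℝ) • (x + y) = c • a := by
      rw [smul_add, Nat.cast_smul_eq_nsmul, Nat.cast_smul_eq_nsmul, heq]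
    have : x + y = (c / m) • a := by
      rw [div_eq_inv_mul, mul_smul, ← heq2, smul_smul, inv_mul_cancel₀ hmR.ne', one_smul]
    show x + y ∈ A; rw [this]
    exact hstar _ ⟨by positivity, (div_le_one hmR).2 hmc⟩ a ha
end

section
/- A Hausdorff group with an open locally minimal subgroup is locally minimal. -/
/-- A Hausdorff topological group is locally minimal if some neighborhood `V` of the identity
witnesses: any coarser Hausdorff group topology in which `V` is still a neighborhood of the
identity coincides with the original topology. -/
def LocallyMinimal (G : Type*) [Group G] [t : TopologicalSpace G] : Prop :=
  ∃ V ∈ nhds (1 : G), ∀ σ : TopologicalSpace G,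
    (∀ s : Set G, σ.IsOpen s → t.IsOpen s) →
    @IsTopologicalGroup G σ _ → @T2Space G σ →
    V ∈ @nhds G σ 1 → σ = t

private lemma auxTG {G H : Type*} [Group G] [Group H] (tG : TopologicalSpace G)
    (hg : @IsTopologicalGroup G tG _) (f : H →* G) :
    @IsTopologicalGroup H (TopologicalSpace.induced f tG) _ := by
  letI := tG
  exact topologicalGroup_induced f

private lemma auxT2 {G H : Type*} (tG : TopologicalSpace G) (h2 : @T2Space G tG)
    (f : H → G) (hf : Function.Injective f) :
    @T2Space H (TopologicalSpace.induced f tG) := by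
  letI := tG
  letI : TopologicalSpace H := TopologicalSpace.induced f tG
  exact Topology.IsEmbedding.t2Space ⟨⟨rfl⟩, hf⟩

theorem stmt12 {G : Type*} [Group G] [TopologicalSpace G] [IsTopologicalGroup G] [T2Space G]
    (H : Subgroup G) (hopen : IsOpen (H : Set G))
    (hH : LocallyMinimal H) :
    LocallyMinimal G := by
  rename_i gG tG tgG t2G
  obtain ⟨V, hV, hmin⟩ := hH
  have hemb := hopen.isOpenEmbedding_subtypeVal
  refine ⟨Subtype.val '' V, ?_, ?_⟩
  · have h1 := hemb.map_nhds_eq (1 : H)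
    rw [show ((1 : H) : G) = 1 from rfl] at h1
    rw [← h1]
    exact Filter.image_mem_map hV
  · have hHmemT : (H : Set G) ∈ @nhds G tG 1 := hopen.mem_nhds (one_mem H)
    intro σ hle hg ht2 hW
    set σH := TopologicalSpace.induced (Subtype.val : H → G) σ with hσHdef
    have hHmem : (H : Set G) ∈ @nhds G σ 1 :=
      Filter.mem_of_superset hW (by rintro x ⟨v, hv, rfl⟩; exact v.2)
    have hgH : @IsTopologicalGroup H σH _ := auxTG σ hg H.subtype
    have ht2H : @T2Space H σH := auxT2 σ ht2 _ Subtype.val_injective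
    have hnσ : @nhds H σH 1 = Filter.comap (Subtype.val : H → G) (@nhds G σ 1) := by
      have h2 := nhds_induced (T := σ) (Subtype.val : H → G) 1
      rwa [show ((1 : H) : G) = 1 from rfl] at h2
    have hVH : V ∈ @nhds H σH 1 := by
      rw [hnσ]
      exact Filter.mem_comap.mpr ⟨Subtype.val '' V, hW,
        (Set.preimage_image_eq V Subtype.val_injective).subset⟩
    have hleH : ∀ s : Set H, σH.IsOpen s →
        @IsOpen H (@instTopologicalSpaceSubtype G (fun x => x ∈ H) tG) s := by
      intro s hs
      obtain ⟨u, hu, hus⟩ := (isOpen_induced_iff (t := σ)).mp hs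
      exact (isOpen_induced_iff (t := tG)).mpr ⟨u, hle u hu, hus⟩
    have heq : σH = @instTopologicalSpaceSubtype G (fun x => x ∈ H) tG :=
      hmin σH hleH hgH ht2H hVH
    have hnt : @nhds H (@instTopologicalSpaceSubtype G (fun x => x ∈ H) tG) 1
        = Filter.comap (Subtype.val : H → G) (@nhds G tG 1) := by
      have h3 := nhds_induced (T := tG) (Subtype.val : H → G) (1 : H)
      rwa [show ((1 : H) : G) = 1 from rfl] at h3
    have hcomap : Filter.comap (Subtype.val : H → G) (@nhds G σ 1)
        = Filter.comap (Subtype.val : H → G) (@nhds G tG 1) := by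
      rw [← hnσ, heq, hnt]
    have hrange : Set.range (Subtype.val : H → G) = (H : Set G) :=
      Subtype.range_coe_subtype
    have hmapσ : Filter.map (Subtype.val : H → G)
        (Filter.comap (Subtype.val : H → G) (@nhds G σ 1)) = @nhds G σ 1 := by
      rw [Filter.map_comap, hrange, inf_eq_left]
      exact Filter.le_principal_iff.mpr hHmem
    have hmapt : Filter.map (Subtype.val : H → G)
        (Filter.comap (Subtype.val : H → G) (@nhds G tG 1)) = @nhds G tG 1 := by
      rw [Filter.map_comap, hrange, inf_eq_left]
      exact Filter.le_principal_iff.mpr hHmemT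
    refine IsTopologicalGroup.ext hg tgG ?_
    rw [← hmapσ, hcomap, hmapt]
end

section
/- Let G be a locally minimal Hausdorff topological group and H a closed central subgroup of G. Then H (with the subspace topology) is locally minimal. -/
open Filter Set Topology Pointwise

/-- Closure is monotone with respect to the topology. -/
lemma lm_closure_anti {α : Type*} {t₁ t₂ : TopologicalSpace α} (h : t₁ ≤ t₂) (s : Set α) :
    @closure α t₁ s ⊆ @closure α t₂ s := by
  have h2 : @IsClosed α t₁ (@closure α t₂ s) :=
    @IsClosed.mk α t₁ _ (TopologicalSpace.le_def.mp h _ (@isClosed_closure α t₂ s).isOpen_compl)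
  exact @closure_minimal α t₁ s _ (@subset_closure α t₂ s) h2

section Aux

variable {G : Type*} [Group G] [TopologicalSpace G] [IsTopologicalGroup G]

omit [TopologicalSpace G] [IsTopologicalGroup G] in
lemma lm_central_comm {H : Subgroup G} (hcentral : H ≤ Subgroup.center G)
    (w : H) (g : G) : g * (w : G) = (w : G) * g :=
  Subgroup.mem_center_iff.mp (hcentral w.2) g

/-- The group filter basis on `G` whose basic sets are `U * W` with `U` a neighborhood of `1`
in `G` and `W` a `σ`-neighborhood of `1` in the central subgroup `H`. -/
def lmBasis (H : Subgroup G) (hcentral : H ≤ Subgroup.center G)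
    (σ : TopologicalSpace H) (hσgrp : @IsTopologicalGroup H σ _) :
    GroupFilterBasis G where
  sets := {s | ∃ U ∈ nhds (1 : G), ∃ W ∈ @nhds H σ 1, s = U * (Subtype.val '' W)}
  nonempty := ⟨Set.univ * (Subtype.val '' Set.univ),
    Set.univ, univ_mem, Set.univ, univ_mem, rfl⟩
  inter_sets := by
    rintro s t ⟨U, hU, W, hW, rfl⟩ ⟨U', hU', W', hW', rfl⟩
    refine ⟨(U ∩ U') * (Subtype.val '' (W ∩ W')),
      ⟨U ∩ U', inter_mem hU hU', W ∩ W', inter_mem hW hW', rfl⟩, ?_⟩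
    rintro x ⟨u, hu, -, ⟨w, hw, rfl⟩, rfl⟩
    exact ⟨⟨u, hu.1, _, ⟨w, hw.1, rfl⟩, rfl⟩, ⟨u, hu.2, _, ⟨w, hw.2, rfl⟩, rfl⟩⟩
  one' := by
    rintro s ⟨U, hU, W, hW, rfl⟩
    exact ⟨1, mem_of_mem_nhds hU, 1, ⟨1, mem_of_mem_nhds hW, by simp⟩, mul_one 1⟩
  mul' := by
    rintro s ⟨U, hU, W, hW, rfl⟩
    obtain ⟨U₁, hU₁, hU₁m⟩ := exists_nhds_one_split hU
    obtain ⟨W₁, hW₁, hW₁m⟩ := @exists_nhds_one_split H σ _ hσgrp.toContinuousMul _ hW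
    refine ⟨U₁ * (Subtype.val '' W₁), ⟨U₁, hU₁, W₁, hW₁, rfl⟩, ?_⟩
    rintro x ⟨-, ⟨u, hu, -, ⟨w, hw, rfl⟩, rfl⟩, -, ⟨u', hu', -, ⟨w', hw', rfl⟩, rfl⟩, rfl⟩
    refine ⟨u * u', hU₁m u hu u' hu', ((w * w' : H) : G),
      ⟨w * w', hW₁m w hw w' hw', rfl⟩, ?_⟩
    push_cast
    calc u * u' * (↑w * ↑w') = u * (u' * ↑w) * ↑w' := by group
    _ = u * (↑w * u') * ↑w' := by rw [lm_central_comm hcentral w u']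
    _ = u * ↑w * (u' * ↑w') := by group
  inv' := by
    rintro s ⟨U, hU, W, hW, rfl⟩
    have hUi : (fun x : G => x⁻¹) ⁻¹' U ∈ nhds (1 : G) := by
      apply continuous_inv.continuousAt.preimage_mem_nhds; simpa using hU
    have hWi : (fun x : H => x⁻¹) ⁻¹' W ∈ @nhds H σ 1 := by
      letI := σ; haveI := hσgrp
      apply continuous_inv.continuousAt.preimage_mem_nhds; simpa using hW
    refine ⟨((fun x : G => x⁻¹) ⁻¹' U) * (Subtype.val '' ((fun x : H => x⁻¹) ⁻¹' W)),
      ⟨_, hUi, _, hWi, rfl⟩, ?_⟩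
    rintro x ⟨u, hu, -, ⟨w, hw, rfl⟩, rfl⟩
    show (u * (w : G))⁻¹ ∈ U * (Subtype.val '' W)
    refine ⟨u⁻¹, hu, ((w⁻¹ : H) : G), ⟨w⁻¹, hw, rfl⟩, ?_⟩
    calc u⁻¹ * ((w⁻¹ : H) : G) = ((w⁻¹ : H) : G) * u⁻¹ := lm_central_comm hcentral w⁻¹ u⁻¹
    _ = ((w : G))⁻¹ * u⁻¹ := by norm_cast
    _ = (u * (w : G))⁻¹ := (mul_inv_rev u (w : G)).symm
  conj' := by
    intro x₀ s hs
    obtain ⟨U, hU, W, hW, rfl⟩ := hs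
    have hUc : (fun u : G => x₀ * u * x₀⁻¹) ⁻¹' U ∈ nhds (1 : G) := by
      apply (((continuous_mul_left x₀).mul continuous_const)).continuousAt.preimage_mem_nhds
      simpa using hU
    refine ⟨((fun u : G => x₀ * u * x₀⁻¹) ⁻¹' U) * (Subtype.val '' W),
      ⟨_, hUc, W, hW, rfl⟩, ?_⟩
    rintro x ⟨u, hu, -, ⟨w, hw, rfl⟩, rfl⟩
    show x₀ * (u * (w : G)) * x₀⁻¹ ∈ U * (Subtype.val '' W)
    refine ⟨x₀ * u * x₀⁻¹, hu, (w : G), ⟨w, hw, rfl⟩, ?_⟩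
    have hcw : x₀⁻¹ * (w : G) = (w : G) * x₀⁻¹ := lm_central_comm hcentral w x₀⁻¹
    calc x₀ * u * x₀⁻¹ * ↑w = x₀ * u * (x₀⁻¹ * ↑w) := by group
    _ = x₀ * u * (↑w * x₀⁻¹) := by rw [hcw]
    _ = x₀ * (u * ↑w) * x₀⁻¹ := by group

/-- Key separation lemma: if `g` belongs to every basic set `U * W`, then `g = 1`. -/
lemma lm_sep [T2Space G] {H : Subgroup G} (hclosed : IsClosed (H : Set G))
    {σ : TopologicalSpace H}
    (hle : (instTopologicalSpaceSubtype : TopologicalSpace H) ≤ σ)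
    (hσgrp : @IsTopologicalGroup H σ _) (hσT2 : @T2Space H σ)
    {g : G} (hg : ∀ U ∈ nhds (1 : G), ∀ W ∈ @nhds H σ 1,
      g ∈ U * (Subtype.val '' W)) : g = 1 := by
  -- Step A : g ∈ H
  have hgH : g ∈ H := by
    have hcl : g ∈ closure (H : Set G) := by
      rw [mem_closure_iff_nhds]
      intro t ht
      have hU : (fun u : G => u⁻¹ * g) ⁻¹' t ∈ nhds (1 : G) := by
        apply (continuous_inv.mul continuous_const).continuousAt.preimage_mem_nhds
        simpa using ht
      obtain ⟨u, hu, -, ⟨w, -, rfl⟩, hx⟩ := hg _ hU Set.univ univ_mem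
      refine ⟨(w : G), ?_, w.2⟩
      have heq : u⁻¹ * g = (w : G) := by rw [← hx]; group
      rw [← heq]
      exact hu
    rwa [hclosed.closure_eq] at hcl
  set g₀ : H := ⟨g, hgH⟩ with hgdef
  -- Step B : g₀ belongs to every σ-neighborhood of 1
  have key : ∀ s ∈ @nhds H σ 1, g₀ ∈ s := by
    intro s hs
    obtain ⟨W', hW', hsplit⟩ := @exists_nhds_one_split H σ _ hσgrp.toContinuousMul _ hs
    have hclD : (1 : H) ∈
        @closure H instTopologicalSpaceSubtype ((fun w : H => g₀ * w⁻¹) '' W') := by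
      rw [@mem_closure_iff_nhds H instTopologicalSpaceSubtype]
      intro t ht
      rw [@nhds_subtype G _ (H : Set G) 1, Filter.mem_comap] at ht
      obtain ⟨U, hU, hUt⟩ := ht
      have hU' : U ∈ nhds (1 : G) := by simpa using hU
      obtain ⟨u, hu, -, ⟨w, hw, rfl⟩, hx⟩ := hg U hU' W' hW'
      refine ⟨g₀ * w⁻¹, hUt ?_, ⟨w, hw, rfl⟩⟩
      show ((g₀ * w⁻¹ : H) : G) ∈ U
      have heq : ((g₀ * w⁻¹ : H) : G) = u := by
        push_cast [hgdef]
        rw [← hx]; group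
      rwa [heq]
    have hclσ : (1 : H) ∈ @closure H σ ((fun w : H => g₀ * w⁻¹) '' W') :=
      lm_closure_anti hle _ hclD
    rw [@mem_closure_iff_nhds H σ] at hclσ
    obtain ⟨x, hxW', w, hwW', rfl⟩ := hclσ W' hW'
    have heq : g₀ = (g₀ * w⁻¹) * w := by group
    rw [heq]
    exact hsplit _ hxW' w hwW'
  -- conclude via T1
  haveI : @T1Space H σ := @T2Space.t1Space H σ hσT2
  have h1 : (1 : H) ∈ @closure H σ {g₀} := by
    rw [@mem_closure_iff_nhds H σ]
    intro t ht
    exact ⟨g₀, key t ht, rfl⟩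
  rw [(@isClosed_singleton H σ _ g₀).closure_eq] at h1
  have : g₀ = 1 := h1.symm
  simpa [hgdef] using congrArg (Subtype.val) this

end Aux

theorem stmt13 {G : Type*} [Group G] [TopologicalSpace G] [IsTopologicalGroup G] [T2Space G]
    (hG : LocallyMinimal G)
    (H : Subgroup G) (hclosed : IsClosed (H : Set G)) (hcentral : H ≤ Subgroup.center G) :
    LocallyMinimal H := by
  obtain ⟨V, hV, hmin⟩ := hG
  obtain ⟨V₁, hV₁o, hV₁1, hV₁V⟩ := exists_open_nhds_one_mul_subset hV
  have hV₁ : V₁ ∈ nhds (1 : G) := hV₁o.mem_nhds hV₁1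
  refine ⟨Subtype.val ⁻¹' V₁, ?_, ?_⟩
  · exact continuous_subtype_val.continuousAt.preimage_mem_nhds (by simpa using hV₁)
  intro σ hcoarse hσgrp hσT2 hWmem
  have hle : (instTopologicalSpaceSubtype : TopologicalSpace H) ≤ σ := by
    rw [TopologicalSpace.le_def]; exact fun s hs => hcoarse s hs
  have hB := lmBasis H hcentral σ hσgrp
  set B := lmBasis H hcentral σ hσgrp with hBdef
  have hmemB : ∀ {s : Set G}, (∃ U ∈ nhds (1 : G), ∃ W ∈ @nhds (↥H) σ 1,
      s = U * (Subtype.val '' W)) → s ∈ B := fun h => h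
  have hTgrp : @IsTopologicalGroup G B.topology _ := B.isTopologicalGroup
  -- every basic set is a τ-neighborhood of 1
  have hbasic : ∀ {s : Set G}, s ∈ B → s ∈ nhds (1 : G) := by
    rintro s ⟨U, hU, W, hW, rfl⟩
    refine Filter.mem_of_superset hU ?_
    intro u hu
    exact ⟨u, hu, 1, ⟨1, mem_of_mem_nhds hW, by simp⟩, mul_one u⟩
  -- B.topology is coarser than the original topology
  have hTle : ∀ s : Set G, (B.topology).IsOpen s → IsOpen s := by
    intro s hs
    rw [isOpen_iff_mem_nhds]
    intro x hx
    have hsx : s ∈ @nhds G B.topology x := @IsOpen.mem_nhds G B.topology x _ hs hx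
    rw [(B.nhds_hasBasis x).mem_iff] at hsx
    obtain ⟨U, hU, hUs⟩ := hsx
    have himg : (fun y => x * y) '' U ∈ nhds x := by
      rw [← map_mul_left_nhds_one x]
      exact image_mem_map (hbasic hU)
    exact Filter.mem_of_superset himg hUs
  -- B.topology is Hausdorff
  have hT2 : @T2Space G B.topology := by
    refine @IsTopologicalGroup.t2Space_of_one_sep G B.topology _ hTgrp ?_
    intro x hx
    by_contra hcon
    push_neg at hcon
    refine hx (lm_sep hclosed hle hσgrp hσT2 ?_)
    intro U hU W hW
    exact hcon (U * (Subtype.val '' W)) (B.mem_nhds_one (hmemB ⟨U, hU, W, hW, rfl⟩))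
  -- V is a B.topology-neighborhood of 1
  have hVT : V ∈ @nhds G B.topology 1 := by
    refine Filter.mem_of_superset
      (B.mem_nhds_one (hmemB ⟨V₁, hV₁, Subtype.val ⁻¹' V₁, hWmem, rfl⟩)) ?_
    rintro x ⟨u, hu, -, ⟨w, hw, rfl⟩, rfl⟩
    exact hV₁V ⟨u, hu, (w : G), hw, rfl⟩
  -- local minimality of G gives B.topology = τ
  have hTeq : B.topology = ‹TopologicalSpace G› := hmin B.topology hTle hTgrp hT2 hVT
  -- conclude : σ equals the subspace topology
  refine IsTopologicalGroup.ext hσgrp inferInstance ?_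
  apply le_antisymm
  · -- every subspace-neighborhood of 1 is a σ-neighborhood
    intro s hs
    rw [@nhds_subtype G _ (H : Set G) 1, Filter.mem_comap] at hs
    obtain ⟨O, hO, hOs⟩ := hs
    have hO' : O ∈ @nhds G B.topology 1 := by
      rw [hTeq]; simpa using hO
    rw [B.nhds_one_hasBasis.mem_iff] at hO'
    obtain ⟨u, hu, huO⟩ := hO'
    obtain ⟨U, hU, W, hW, rfl⟩ := hu
    refine Filter.mem_of_superset hW ?_
    intro w hw
    apply hOs
    show ((w : H) : G) ∈ O
    exact huO ⟨1, mem_of_mem_nhds hU, (w : G), ⟨w, hw, rfl⟩, one_mul _⟩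
  · -- σ coarser than subspace topology
    exact nhds_mono hle
end

section
/- Every locally minimal SIN group that is NSnS is metrizable. In particular, every locally minimal abelian NSS topological group is metrizable. -/
open Filter Topology Set Pointwise

/-- Construction step: inside any neighborhood of `1` of a SIN group we can find a
symmetric, conjugation-invariant neighborhood whose square is inside the given one. -/
lemma sin_step {G : Type*} [Group G] [TopologicalSpace G] [IsTopologicalGroup G]
    (hSIN : ∀ U ∈ nhds (1 : G), ∃ V ∈ nhds (1 : G), ∀ x : G, ∀ v ∈ V, x⁻¹ * v * x ∈ U) :
    ∀ W ∈ nhds (1 : G), ∃ U : Set G,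
      (U ∈ nhds (1 : G) ∧ (∀ g ∈ U, g⁻¹ ∈ U) ∧ (∀ x g, g ∈ U → x⁻¹ * g * x ∈ U)) ∧
      U * U ⊆ W := by
  intro W hW
  obtain ⟨W₁, hW₁, hW₁mul⟩ := exists_nhds_one_split hW
  obtain ⟨V, hV, hVconj⟩ := hSIN W₁ hW₁
  set C : Set G := {g | ∀ x : G, x⁻¹ * g * x ∈ W₁} with hC
  have hCnhds : C ∈ nhds (1 : G) :=
    mem_of_superset hV fun v hv => fun x => hVconj x v hv
  have hCsub : C ⊆ W₁ := fun g hg => by simpa using hg 1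
  have hCconj : ∀ x g, g ∈ C → x⁻¹ * g * x ∈ C := by
    intro x g hg y
    have h1 := hg (x * y)
    have heq : (x * y)⁻¹ * g * (x * y) = y⁻¹ * (x⁻¹ * g * x) * y := by
      simp [mul_assoc, mul_inv_rev]
    rwa [heq] at h1
  have hCinvnhds : {g : G | g⁻¹ ∈ C} ∈ nhds (1 : G) := by
    have : ContinuousAt (fun g : G => g⁻¹) 1 := continuous_inv.continuousAt
    have h := this.preimage_mem_nhds (by simpa using hCnhds)
    simpa [Set.preimage] using h
  refine ⟨C ∩ {g | g⁻¹ ∈ C}, ⟨inter_mem hCnhds hCinvnhds, ?_, ?_⟩, ?_⟩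
  · rintro g ⟨hg1, hg2⟩
    exact ⟨hg2, by simpa using hg1⟩
  · rintro x g ⟨hg1, hg2⟩
    refine ⟨hCconj x g hg1, ?_⟩
    have := hCconj x g⁻¹ hg2
    simpa [mul_inv_rev, mul_assoc] using this
  · rintro _ ⟨a, ha, b, hb, rfl⟩
    exact hW₁mul a (hCsub ha.1) b (hCsub hb.1)

/-- If a group filter basis separates points from `1`, its topology is Hausdorff. -/
lemma gfb_t2 {G : Type*} [Group G] (B : GroupFilterBasis G)
    (h : ∀ x : G, x ≠ 1 → ∃ U ∈ B, (1 : G) ∉ (fun y => x * y) '' U) :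
    @T2Space G B.topology := by
  letI := B.topology
  rw [IsTopologicalGroup.t2Space_iff_one_closed, ← isOpen_compl_iff, isOpen_iff_mem_nhds]
  intro x hx
  have hx1 : x ≠ 1 := by simpa using hx
  obtain ⟨U, hU, hU1⟩ := h x hx1
  have hmem : (fun y => x * y) '' U ∈ nhds x := by
    have := (B.nhds_hasBasis x).mem_of_mem hU
    exact this
  refine mem_of_superset hmem fun g hg => ?_
  simp only [mem_compl_iff, mem_singleton_iff]
  rintro rfl
  exact hU1 hg

theorem stmt14 {G : Type*} [Group G] [TopologicalSpace G] [IsTopologicalGroup G] [T2Space G]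
    (hmin : LocallyMinimal G)
    (hSIN : ∀ U ∈ nhds (1 : G), ∃ V ∈ nhds (1 : G), ∀ x : G, ∀ v ∈ V, x⁻¹ * v * x ∈ U)
    (hNSnS : ∃ V ∈ nhds (1 : G), ∀ N : Subgroup G, N.Normal → (N : Set G) ⊆ V → N = ⊥) :
    TopologicalSpace.MetrizableSpace G := by
  obtain ⟨Vm, hVm, hminV⟩ := hmin
  obtain ⟨Vn, hVn, hNS⟩ := hNSnS
  have hV₀ : Vm ∩ Vn ∈ nhds (1 : G) := inter_mem hVm hVn
  choose f hP hsq using sin_step hSIN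
  let seq : ℕ → {S : Set G // S ∈ nhds (1 : G)} := fun n =>
    Nat.rec ⟨f _ hV₀, (hP _ hV₀).1⟩ (fun _ p => ⟨f p.1 p.2, (hP _ _).1⟩) n
  let U : ℕ → Set G := fun n => (seq n).1
  have hUnhds : ∀ n, U n ∈ nhds (1 : G) := fun n => (seq n).2
  have hprops : ∀ n, (∀ g ∈ U n, g⁻¹ ∈ U n) ∧ (∀ x g, g ∈ U n → x⁻¹ * g * x ∈ U n) := by
    intro n
    cases n with
    | zero => exact ⟨(hP _ hV₀).2.1, (hP _ hV₀).2.2⟩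
    | succ m => exact ⟨(hP _ (seq m).2).2.1, (hP _ (seq m).2).2.2⟩
  have hUmul : ∀ n, U (n + 1) * U (n + 1) ⊆ U n := fun n => hsq (seq n).1 (seq n).2
  have hone : ∀ n, (1 : G) ∈ U n := fun n => mem_of_mem_nhds (hUnhds n)
  have hsub : ∀ n, U (n + 1) ⊆ U n := by
    intro n g hg
    have := hUmul n (Set.mul_mem_mul (hone (n + 1)) hg)
    simpa using this
  have hmono : Antitone U := antitone_nat_of_succ_le hsub
  have hU0 : U 0 ⊆ Vm ∩ Vn := by
    intro g hg
    have := hsq _ hV₀ (Set.mul_mem_mul (mem_of_mem_nhds ((seq 0).2)) hg)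
    simpa using this
  let B : GroupFilterBasis G :=
    { sets := Set.range U
      nonempty := ⟨U 0, ⟨0, rfl⟩⟩
      inter_sets := by
        rintro _ _ ⟨m, rfl⟩ ⟨n, rfl⟩
        exact ⟨U (max m n), ⟨max m n, rfl⟩,
          Set.subset_inter (hmono (le_max_left m n)) (hmono (le_max_right m n))⟩
      one' := by rintro _ ⟨n, rfl⟩; exact hone n
      mul' := by rintro _ ⟨n, rfl⟩; exact ⟨U (n + 1), ⟨n + 1, rfl⟩, hUmul n⟩
      inv' := by rintro _ ⟨n, rfl⟩; exact ⟨U n, ⟨n, rfl⟩, fun g hg => (hprops n).1 g hg⟩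
      conj' := by
        rintro x₀ _ ⟨n, rfl⟩
        refine ⟨U n, ⟨n, rfl⟩, fun g hg => ?_⟩
        have := (hprops n).2 x₀⁻¹ g hg
        simpa [inv_inv] using this }
  -- the intersection of all `U n` is a normal subgroup inside `Vn`, hence trivial
  let N : Subgroup G :=
    { carrier := ⋂ n, U n
      one_mem' := Set.mem_iInter.2 hone
      mul_mem' := fun {a b} ha hb => Set.mem_iInter.2 fun n =>
        hUmul n (Set.mul_mem_mul (Set.mem_iInter.1 ha (n + 1)) (Set.mem_iInter.1 hb (n + 1)))
      inv_mem' := fun {a} ha => Set.mem_iInter.2 fun n =>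
        (hprops n).1 a (Set.mem_iInter.1 ha n) }
  have hNnormal : N.Normal := by
    constructor
    intro g hg x
    refine Set.mem_iInter.2 fun n => ?_
    have := (hprops n).2 x⁻¹ g (Set.mem_iInter.1 hg n)
    simpa [inv_inv] using this
  have hNbot : N = ⊥ := by
    refine hNS N hNnormal fun g hg => ?_
    exact (hU0 (Set.mem_iInter.1 hg 0)).2
  have hsep : ∀ x : G, x ≠ 1 → ∃ n, x ∉ U n := by
    intro x hx
    by_contra h
    push_neg at h
    have hxN : x ∈ N := Set.mem_iInter.2 h
    rw [hNbot] at hxN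
    exact hx (Subgroup.mem_bot.1 hxN)
  haveI hT2 : @T2Space G B.topology := by
    refine gfb_t2 B fun x hx => ?_
    obtain ⟨n, hn⟩ := hsep x hx
    refine ⟨U n, ⟨n, rfl⟩, ?_⟩
    rintro ⟨g, hg, hg1⟩
    have hgx : g = x⁻¹ := eq_inv_of_mul_eq_one_right hg1
    rw [hgx] at hg
    have := (hprops n).1 _ hg
    rw [inv_inv] at this
    exact hn this
  -- the basis topology is a coarser Hausdorff group topology containing `Vm`
  have hcoarse : ∀ s : Set G, B.topology.IsOpen s → IsOpen s := by
    intro s hs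
    rw [isOpen_iff_mem_nhds]
    intro x hx
    have hmem : s ∈ @nhds G B.topology x := by
      exact @IsOpen.mem_nhds G B.topology x s hs hx
    rw [(B.nhds_hasBasis x).mem_iff] at hmem
    obtain ⟨V, hVB, hVs⟩ := hmem
    obtain ⟨n, rfl⟩ := hVB
    have h1 : x • U n ∈ nhds (x • (1 : G)) := smul_mem_nhds_smul x (hUnhds n)
    rw [smul_eq_mul, mul_one] at h1
    refine mem_of_superset h1 ?_
    rintro _ ⟨g, hg, rfl⟩
    exact hVs ⟨g, hg, rfl⟩
  have hVmB : Vm ∈ @nhds G B.topology 1 :=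
    mem_of_superset (B.mem_nhds_one ⟨0, rfl⟩) fun g hg => (hU0 hg).1
  have hσt := hminV B.topology hcoarse B.isTopologicalGroup hT2 hVmB
  -- hence the original topology has a countable neighborhood basis at `1`
  have hbasis : (nhds (1 : G)).HasBasis (fun _ : ℕ => True) U := by
    rw [← hσt]
    refine B.nhds_one_hasBasis.to_hasBasis ?_ ?_
    · rintro _ ⟨n, rfl⟩
      exact ⟨n, trivial, subset_rfl⟩
    · intro n _
      exact ⟨U n, ⟨n, rfl⟩, subset_rfl⟩
  haveI : (nhds (1 : G)).IsCountablyGenerated := hbasis.isCountablyGenerated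
  letI := IsTopologicalGroup.rightUniformSpace G
  haveI : (uniformity G).IsCountablyGenerated := by
    rw [uniformity_eq_comap_nhds_one']
    exact comap.isCountablyGenerated _ _
  exact UniformSpace.metrizableSpace
end

section
/- Let G be an abelian topological group with a closed subgroup H such that both H and G/H are UFSS. Then G is UFSS. -/
open Pointwise

/-- `U` is a distinguished neighborhood of `0`: the sets `(1/n)U`, `n ≥ 1`, form a
neighborhood basis at `0`. -/
def IsDistinguished {G : Type*} [AddCommGroup G] [TopologicalSpace G] (U : Set G) : Prop :=
  (nhds (0 : G)).HasBasis (fun n : ℕ => 0 < n) (fun n => oneDiv n U)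

/-- A Hausdorff topological abelian group is UFSS (uniformly free from small subgroups)
if it admits a distinguished neighborhood of `0`. -/
def IsUFSS (G : Type*) [AddCommGroup G] [TopologicalSpace G] : Prop :=
  T2Space G ∧ ∃ U : Set G, IsDistinguished U

lemma oneDiv_mem_nhds {G : Type*} [AddCommGroup G] [TopologicalSpace G]
    [IsTopologicalAddGroup G] {D : Set G} (hD : D ∈ nhds (0 : G)) (n : ℕ) :
    oneDiv n D ∈ nhds (0 : G) := by
  have : oneDiv n D = ⋂ k ∈ Finset.Icc 1 n, (fun x : G => k • x) ⁻¹' D := by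
    ext x
    simp [oneDiv, Finset.mem_Icc, and_imp]
  rw [this]
  refine (Filter.biInter_finset_mem _).2 fun k _ => ?_
  have hc : Continuous fun x : G => k • x := continuous_nsmul k
  exact hc.continuousAt.preimage_mem_nhds (by simpa using hD)

theorem stmt17 {G : Type*} [AddCommGroup G] [TopologicalSpace G] [IsTopologicalAddGroup G]
    (H : AddSubgroup G) (hclosed : IsClosed (H : Set G))
    (hH : IsUFSS H) (hQ : IsUFSS (G ⧸ H)) :
    IsUFSS G := by
  obtain ⟨hT2H, U, hU⟩ := hH
  obtain ⟨hT2Q, V, hV⟩ := hQ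
  -- G is Hausdorff
  have h0closed : IsClosed ({0} : Set G) := by
    have h1 : IsClosed ({(0 : H)} : Set H) := isClosed_singleton
    have h2 := hclosed.isClosedMap_subtype_val _ h1
    simpa using h2
  haveI : T1Space G := by
    refine ⟨fun x => ?_⟩
    have := (Homeomorph.addRight x).isClosedMap _ h0closed
    simpa using this
  haveI : T2Space G := inferInstance
  refine ⟨inferInstance, ?_⟩
  -- `U` and `V` are themselves neighborhoods of `0`
  have hUnhd : U ∈ nhds (0 : H) := by
    refine Filter.mem_of_superset (hU.mem_of_mem (i := 1) one_pos) fun x hx => ?_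
    simpa using hx 1 le_rfl le_rfl
  have hVnhd : V ∈ nhds (0 : G ⧸ H) := by
    refine Filter.mem_of_superset (hV.mem_of_mem (i := 1) one_pos) fun x hx => ?_
    simpa using hx 1 le_rfl le_rfl
  -- pick `W₀` a nbhd of 0 in G with `W₀ ∩ H ⊆ U`
  have hUnhd' := hUnhd
  rw [nhds_subtype_eq_comap, Filter.mem_comap] at hUnhd'
  obtain ⟨W₀, hW₀, hW₀sub⟩ := hUnhd'
  simp only [AddSubgroup.coe_zero] at hW₀
  obtain ⟨W, hW, hWhalf⟩ := exists_nhds_zero_half hW₀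
  have hπcont : Continuous ((↑) : G → G ⧸ H) := QuotientAddGroup.continuous_mk
  set D : Set G := W ∩ ((↑) : G → G ⧸ H) ⁻¹' V with hDdef
  have hD : D ∈ nhds (0 : G) :=
    Filter.inter_mem hW (hπcont.continuousAt.preimage_mem_nhds (by simpa using hVnhd))
  refine ⟨D, ?_⟩
  refine ⟨fun t => ⟨fun ht => ?_, fun ⟨n, hn, hsub⟩ =>
    Filter.mem_of_superset (oneDiv_mem_nhds hD n) hsub⟩⟩
  -- forward direction
  obtain ⟨O₁, hO₁, hO₁half⟩ := exists_nhds_zero_half ht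
  have hO₁H : (Subtype.val ⁻¹' O₁ : Set H) ∈ nhds (0 : H) :=
    continuous_subtype_val.continuousAt.preimage_mem_nhds (by simpa using hO₁)
  obtain ⟨m, hm, hmsub⟩ := hU.mem_iff.1 hO₁H
  set Ω₀ : Set G := O₁ ∩ W with hΩ₀def
  have hΩ₀ : Ω₀ ∈ nhds (0 : G) := Filter.inter_mem hO₁ hW
  set Ω : Set G := Ω₀ ∩ (-Ω₀) with hΩdef
  have hΩ : Ω ∈ nhds (0 : G) := Filter.inter_mem hΩ₀ (neg_mem_nhds_zero G hΩ₀)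
  have himg : ((↑) : G → G ⧸ H) '' (oneDiv m Ω) ∈ nhds (0 : G ⧸ H) := by
    have := (QuotientAddGroup.isOpenMap_coe (N := H)).image_mem_nhds (oneDiv_mem_nhds hΩ m)
    simpa using this
  obtain ⟨n', hn', hn'sub⟩ := hV.mem_iff.1 himg
  refine ⟨max m n', lt_of_lt_of_le hm (le_max_left m n'), fun x hx => ?_⟩
  -- `π x` is small in the quotient
  have hπx : ((x : G) : G ⧸ H) ∈ oneDiv n' V := by
    intro k hk1 hk2
    have := (hx k hk1 (hk2.trans (le_max_right m n'))).2
    simpa using this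
  obtain ⟨ω, hω, hωx⟩ := hn'sub hπx
  have hsubH : x - ω ∈ H := (QuotientAddGroup.eq_iff_sub_mem).1 hωx.symm
  -- the `H`-part is small in `H`
  have hkey : (⟨x - ω, hsubH⟩ : H) ∈ oneDiv m U := by
    intro k hk1 hk2
    have h1 : k • x ∈ W := (hx k hk1 (hk2.trans (le_max_left m n'))).1
    have h2 : k • ω ∈ Ω := hω k hk1 hk2
    have h3 : -(k • ω) ∈ W := (Set.mem_neg.1 h2.2).2
    have h4 : k • (x - ω) ∈ W₀ := by
      have := hWhalf _ h1 _ h3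
      rwa [smul_sub, sub_eq_add_neg]
    refine hW₀sub ?_
    show ((k • (⟨x - ω, hsubH⟩ : H) : H) : G) ∈ W₀
    simpa using h4
  have hxω : (x - ω : G) ∈ O₁ := hmsub hkey
  have hωO : ω ∈ O₁ := by
    have := hω 1 le_rfl hm
    rw [one_smul] at this
    exact this.1.1
  have := hO₁half _ hxω _ hωO
  simpa using this
end

section
/- Let U be a GTG subset of an abelian group G, and let T_U be the group topology generated by the basis {(1/n)U : n ∈ ℕ} of neighborhoods of 0. Then the quotient group G_U = (G, T_U)/U_∞ with the quotient topology is Hausdorff and UFSS, with distinguished neighborhood the image of (1/m)U where m satisfies (1/m)U + (1/m)U ⊆ U. -/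
open Pointwise

theorem stmt18 {G : Type*} [AddCommGroup G] [TopologicalSpace G] [IsTopologicalAddGroup G]
    (U : Set G) (h0 : (0 : G) ∈ U) (hsym : ∀ x ∈ U, -x ∈ U)
    (hbasis : IsDistinguished U)
    (N : AddSubgroup G) (hN : (N : Set G) = {x : G | ∀ n : ℕ, 1 ≤ n → n • x ∈ U})
    (m : ℕ) (hm : 0 < m) (hGTG : oneDiv m U + oneDiv m U ⊆ U) :
    T2Space (G ⧸ N) ∧
      (nhds (0 : G ⧸ N)).HasBasis (fun n : ℕ => 0 < n)
        (fun n => oneDiv n ((QuotientAddGroup.mk' N) '' (oneDiv m U))) := by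
  -- N is the closure of {0}
  have hNmem : ∀ x : G, x ∈ N ↔ ∀ n : ℕ, 1 ≤ n → n • x ∈ U := by
    intro x
    constructor
    · intro hx; have : x ∈ (N : Set G) := hx; rw [hN] at this; exact this
    · intro hx; show x ∈ (N : Set G); rw [hN]; exact hx
  have hNsub : ∀ n : ℕ, (N : Set G) ⊆ oneDiv n U := by
    intro n x hx k hk1 hk2
    exact ((hNmem x).1 hx) k hk1
  have hclosed : IsClosed (N : Set G) := by
    have : (N : Set G) = closure ({0} : Set G) := by
      ext x
      rw [mem_closure_iff_nhds]
      constructor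
      · intro hx t ht
        refine ⟨0, ?_, rfl⟩
        rw [← map_add_left_nhds_zero x, Filter.mem_map] at ht
        rw [hbasis.mem_iff] at ht
        obtain ⟨n, hn, hsub⟩ := ht
        have hxn : x ∈ oneDiv n U := hNsub n hx
        have hneg : -x ∈ oneDiv n U := by
          intro k hk1 hk2
          have := hxn k hk1 hk2
          simpa [smul_neg] using hsym _ this
        have : x + -x ∈ t := hsub hneg
        simpa using this
      · intro hx
        show x ∈ (N : Set G)
        rw [hN]
        intro n hn
        have hnb : oneDiv n U ∈ nhds (0 : G) := hbasis.mem_of_mem hn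
        have hmem : (fun y => x + y) '' oneDiv n U ∈ nhds x := by
          rw [← map_add_left_nhds_zero x]
          exact Filter.image_mem_map hnb
        obtain ⟨y, hy, hy0⟩ := hx _ hmem
        obtain ⟨u, hu, hux⟩ := hy
        have hy0' : y = 0 := hy0
        have : x + u = 0 := by simpa using hux.trans hy0'
        have hux' : u = -x := by linear_combination (norm := abel_nf) this
        subst hux'
        have := hu n hn le_rfl
        have : -(n • x) ∈ U := by simpa [smul_neg] using this
        simpa using hsym _ this
    rw [this]; exact isClosed_closure
  haveI : IsClosed (N : Set G) := hclosed
  constructor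
  · infer_instance
  · have hq : nhds (0 : G ⧸ N) = Filter.map (QuotientAddGroup.mk' N) (nhds (0 : G)) := by
      have := QuotientAddGroup.nhds_eq N (0 : G)
      simpa using this
    have hb1 : (nhds (0 : G ⧸ N)).HasBasis (fun n : ℕ => 0 < n)
        (fun n => (QuotientAddGroup.mk' N) '' oneDiv n U) := by
      rw [hq]; exact hbasis.map _
    refine hb1.to_hasBasis ?_ ?_
    · -- for each n > 0, oneDiv n (π '' oneDiv m U) ⊆ π '' oneDiv n U
      intro n hn
      refine ⟨n, hn, ?_⟩
      intro y hy
      obtain ⟨w, hw, hwy⟩ := hy 1 le_rfl hn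
      rw [one_smul] at hwy
      refine ⟨w, ?_, hwy⟩
      intro k hk1 hk2
      obtain ⟨v, hv, hvy⟩ := hy k hk1 hk2
      -- k • w - v ∈ N
      have hker : k • w - v ∈ N := by
        have : (QuotientAddGroup.mk' N) (k • w - v) = 0 := by
          rw [map_sub, map_nsmul, hwy, hvy, sub_self]
        exact (QuotientAddGroup.eq_zero_iff _).1 this
      have hkwN : k • w - v ∈ oneDiv m U := hNsub m hker
      have : k • w = v + (k • w - v) := by abel
      rw [this]
      exact hGTG (Set.add_mem_add hv hkwN)
    · -- for each n > 0, π '' oneDiv (n * m) U ⊆ oneDiv n (π '' oneDiv m U)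
      intro n hn
      refine ⟨n * m, Nat.mul_pos hn hm, ?_⟩
      rintro _ ⟨x, hx, rfl⟩ k hk1 hk2
      refine ⟨k • x, ?_, map_nsmul _ k x⟩
      intro j hj1 hj2
      rw [smul_smul]
      exact hx (j * k) (Nat.one_le_iff_ne_zero.2 (Nat.mul_ne_zero (by omega) (by omega)))
        ((Nat.mul_le_mul hj2 hk2).trans_eq (Nat.mul_comm m n))
end
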